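/- arXiv:2508.15925 — 3 statements merged into one kernel-verified Lean document; each statement's English description precedes it below -/
import Mathlib

section
/- Let r ≥ 1 and k ≥ 1 be integers, let a_1, …, a_{r−1} be positive integers, let β_1, …, β_{r−1} be distinct nonzero complex numbers, let p, q, p₁, q₁ be integers with 0 ≤ p₁ < p, 0 ≤ q₁ < q and p·q₁ − q·p₁ = ±1, and let P ∈ ℂ[x] be a polynomial of degree at most k − 1. Set 𝒮(x,y) = x^k·y + P(x), 𝒢(x,y) = x^{q₁}·𝒮(x,y)^q, and ℋ₂(x,y) = x^{p₁}·𝒮(x,y)^p·∏_{i=1}^{r−1}(β_i − 𝒢(x,y))^{a_i} in ℂ[x,y]. Then for any polynomials ψ₁, ψ₂ ∈ ℂ[x,y] of total degrees n₁ ≥ 1 and n₂ ≥ 1, the total degree of ℋ₂ composed with (ψ₁,ψ₂), i.e. of ψ₁^{p₁}(ψ₁^k ψ₂ + P(ψ₁))^p · ∏_{i=1}^{r−1}(β_i − ψ₁^{q₁}(ψ₁^k ψ₂ + P(ψ₁))^q)^{a_i}, equals p₁n₁ + p(kn₁ + n₂) + (q₁n₁ + q(kn₁ + n₂))·(a_1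 + ⋯ + a_{r−1}); in particular it is greater than or equal to the total degree of ℋ₂, which equals p₁ + p(k+1) + (q₁ + q(k+1))·(a_1 + ⋯ + a_{r−1}). -/
open MvPolynomial

variable {σ : Type*}

lemma Finsupp.degree_add' (u v : σ →₀ ℕ) : (u + v).degree = u.degree + v.degree := by
  simp [Finsupp.degree_eq_weight_one, map_add]

lemma hcTop_ne_zero {φ : MvPolynomial σ ℂ} (h : φ ≠ 0) :
    homogeneousComponent φ.totalDegree φ ≠ 0 := by
  classical
  obtain ⟨d, hd, hdeg⟩ := φ.support.exists_mem_eq_sup (support_nonempty.mpr h)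
    (fun s => s.sum fun _ e => e)
  intro h0
  have hc := coeff_homogeneousComponent (φ.totalDegree) d (φ := φ)
  have hdd : d.degree = φ.totalDegree := by
    rw [totalDegree, hdeg]; rfl
  rw [h0, coeff_zero, if_pos hdd] at hc
  exact (mem_support_iff.mp hd) hc.symm

lemma hcTop_mul (p q : MvPolynomial σ ℂ) :
    homogeneousComponent (p.totalDegree + q.totalDegree) (p * q) =
      homogeneousComponent p.totalDegree p * homogeneousComponent q.totalDegree q := by
  classical
  set m := p.totalDegree
  set n := q.totalDegree
  ext d
  rw [coeff_homogeneousComponent, coeff_mul, coeff_mul]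
  have key : ∀ x ∈ Finset.HasAntidiagonal.antidiagonal d,
      coeff x.1 (homogeneousComponent m p) * coeff x.2 (homogeneousComponent n q) =
      if d.degree = m + n then coeff x.1 p * coeff x.2 q else 0 := by
    rintro ⟨u, v⟩ hx
    rw [Finset.HasAntidiagonal.mem_antidiagonal] at hx
    have hdeg : u.degree + v.degree = d.degree := by rw [← hx, Finsupp.degree_add']
    rw [coeff_homogeneousComponent, coeff_homogeneousComponent]
    by_cases hd : d.degree = m + n
    · rw [if_pos hd]
      by_cases hu : u.degree = m
      · have hv : v.degree = n := by omega
        rw [if_pos hu, if_pos hv]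
      · rcases lt_or_gt_of_ne hu with h1 | h1
        · have hv : n < v.degree := by omega
          have : coeff v q = 0 := coeff_eq_zero_of_totalDegree_lt (by
            simpa [Finsupp.degree_apply] using hv)
          simp [this, if_neg hu]
        · have : coeff u p = 0 := coeff_eq_zero_of_totalDegree_lt (by
            simpa [Finsupp.degree_apply] using h1)
          simp [this, if_neg hu]
    · rw [if_neg hd]
      by_cases hu : u.degree = m
      · have hv : v.degree ≠ n := by omega
        rw [if_neg hv, mul_zero]
      · rw [if_neg hu, zero_mul]
  rw [Finset.sum_congr rfl key]
  by_cases hd : d.degree = m + n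
  · simp [hd]
  · simp [hd]

lemma totalDegree_mul_eq' {p q : MvPolynomial σ ℂ} (hp : p ≠ 0) (hq : q ≠ 0) :
    (p * q).totalDegree = p.totalDegree + q.totalDegree := by
  refine le_antisymm (totalDegree_mul p q) ?_
  by_contra hlt
  push_neg at hlt
  have h0 : homogeneousComponent (p.totalDegree + q.totalDegree) (p * q) = 0 :=
    homogeneousComponent_eq_zero _ _ hlt
  rw [hcTop_mul] at h0
  exact mul_ne_zero (hcTop_ne_zero hp) (hcTop_ne_zero hq) h0

lemma totalDegree_pow_eq' {p : MvPolynomial σ ℂ} (hp : p ≠ 0) (n : ℕ) :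
    (p ^ n).totalDegree = n * p.totalDegree := by
  induction n with
  | zero => simp
  | succ n ih =>
    rw [pow_succ, totalDegree_mul_eq' (pow_ne_zero _ hp) hp, ih]
    ring

lemma totalDegree_prod_eq' {ι : Type*} (s : Finset ι) (f : ι → MvPolynomial σ ℂ)
    (hf : ∀ i ∈ s, f i ≠ 0) :
    (∏ i ∈ s, f i).totalDegree = ∑ i ∈ s, (f i).totalDegree := by
  classical
  induction s using Finset.cons_induction with
  | empty => simp
  | cons a s has ih =>
    rw [Finset.prod_cons, Finset.sum_cons,
      totalDegree_mul_eq' (hf a (Finset.mem_cons_self a s))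
        (Finset.prod_ne_zero_iff.mpr fun i hi => hf i (Finset.mem_cons_of_mem hi)),
      ih (fun i hi => hf i (Finset.mem_cons_of_mem hi))]

lemma totalDegree_aeval_le (P : Polynomial ℂ) (ψ : MvPolynomial σ ℂ) :
    (Polynomial.aeval ψ P).totalDegree ≤ P.natDegree * ψ.totalDegree := by
  rw [Polynomial.aeval_eq_sum_range]
  refine totalDegree_finsetSum_le fun i hi => ?_
  refine (totalDegree_smul_le _ _).trans ?_
  refine (totalDegree_pow _ _).trans ?_
  have : i ≤ P.natDegree := by
    have := Finset.mem_range.mp hi; omega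
  exact Nat.mul_le_mul_right _ this

lemma key_deg (k p q p₁ q₁ m : ℕ) (hk : 1 ≤ k) (hp : 1 ≤ p) (hq : 1 ≤ q)
    (P : Polynomial ℂ) (hP : P.natDegree < k)
    (a : Fin m → ℕ) (β : Fin m → ℂ)
    (ψ₁ ψ₂ : MvPolynomial (Fin 2) ℂ) (n₁ n₂ : ℕ) (hn₁ : 1 ≤ n₁) (hn₂ : 1 ≤ n₂)
    (hψ₁ : ψ₁.totalDegree = n₁) (hψ₂ : ψ₂.totalDegree = n₂) :
    (ψ₁ ^ p₁ * (ψ₁ ^ k * ψ₂ + Polynomial.aeval ψ₁ P) ^ p *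
        ∏ i, (MvPolynomial.C (β i) -
          ψ₁ ^ q₁ * (ψ₁ ^ k * ψ₂ + Polynomial.aeval ψ₁ P) ^ q) ^ a i).totalDegree
      = p₁ * n₁ + p * (k * n₁ + n₂) + (q₁ * n₁ + q * (k * n₁ + n₂)) * ∑ i, a i := by
  have hψ₁0 : ψ₁ ≠ 0 := by
    intro h; rw [h, totalDegree_zero] at hψ₁; omega
  have hψ₂0 : ψ₂ ≠ 0 := by
    intro h; rw [h, totalDegree_zero] at hψ₂; omega
  set T := ψ₁ ^ k * ψ₂ + Polynomial.aeval ψ₁ P with hT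
  have hT1 : (ψ₁ ^ k * ψ₂).totalDegree = k * n₁ + n₂ := by
    rw [totalDegree_mul_eq' (pow_ne_zero _ hψ₁0) hψ₂0, totalDegree_pow_eq' hψ₁0, hψ₁, hψ₂]
  have haev : (Polynomial.aeval ψ₁ P : MvPolynomial (Fin 2) ℂ).totalDegree <
      (ψ₁ ^ k * ψ₂).totalDegree := by
    refine lt_of_le_of_lt (totalDegree_aeval_le P ψ₁) ?_
    rw [hψ₁, hT1]
    nlinarith
  have hTdeg : T.totalDegree = k * n₁ + n₂ :=
    (totalDegree_add_eq_left_of_totalDegree_lt haev).trans hT1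
  have hT0 : T ≠ 0 := by
    intro h; rw [h, totalDegree_zero] at hTdeg; nlinarith
  have hGdeg : (ψ₁ ^ q₁ * T ^ q).totalDegree = q₁ * n₁ + q * (k * n₁ + n₂) := by
    rw [totalDegree_mul_eq' (pow_ne_zero _ hψ₁0) (pow_ne_zero _ hT0),
      totalDegree_pow_eq' hψ₁0, totalDegree_pow_eq' hT0, hψ₁, hTdeg]
  have hGpos : 0 < q₁ * n₁ + q * (k * n₁ + n₂) := by nlinarith
  have hfac : ∀ i : Fin m, (MvPolynomial.C (β i) - ψ₁ ^ q₁ * T ^ q).totalDegree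
      = q₁ * n₁ + q * (k * n₁ + n₂) := by
    intro i
    rw [sub_eq_add_neg, totalDegree_add_eq_right_of_totalDegree_lt
      (by rw [totalDegree_neg, totalDegree_C, hGdeg]; exact hGpos),
      totalDegree_neg, hGdeg]
  have hfac0 : ∀ i : Fin m, (MvPolynomial.C (β i) - ψ₁ ^ q₁ * T ^ q) ≠ 0 := by
    intro i h
    have := hfac i
    rw [h, totalDegree_zero] at this
    omega
  rw [totalDegree_mul_eq'
      (mul_ne_zero (pow_ne_zero _ hψ₁0) (pow_ne_zero _ hT0))
      (Finset.prod_ne_zero_iff.mpr fun i _ => pow_ne_zero _ (hfac0 i)),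
    totalDegree_mul_eq' (pow_ne_zero _ hψ₁0) (pow_ne_zero _ hT0),
    totalDegree_pow_eq' hψ₁0, totalDegree_pow_eq' hT0, hψ₁, hTdeg,
    totalDegree_prod_eq' _ _ (fun i _ => pow_ne_zero _ (hfac0 i))]
  have hsum : ∑ i : Fin m, ((MvPolynomial.C (β i) - ψ₁ ^ q₁ * T ^ q) ^ a i).totalDegree
      = ∑ i : Fin m, a i * (q₁ * n₁ + q * (k * n₁ + n₂)) :=
    Finset.sum_congr rfl fun i _ => by rw [totalDegree_pow_eq' (hfac0 i), hfac i]
  rw [hsum, ← Finset.sum_mul]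
  ring

/-- Neumann–Norbury family 𝔉₂: degree of `ℋ₂ ∘ (ψ₁, ψ₂)`. -/
theorem stmt1 (r k : ℕ) (hr : 1 ≤ r) (hk : 1 ≤ k)
    (a : Fin (r - 1) → ℕ) (ha : ∀ i, 1 ≤ a i)
    (β : Fin (r - 1) → ℂ) (hβ0 : ∀ i, β i ≠ 0) (hβinj : Function.Injective β)
    (p q p₁ q₁ : ℕ) (hp : p₁ < p) (hq : q₁ < q)
    (hpq : (p * q₁ : ℤ) - q * p₁ = 1 ∨ (p * q₁ : ℤ) - q * p₁ = -1)
    (P : Polynomial ℂ) (hP : P.degree < (k : WithBot ℕ))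
    (S G H2 : MvPolynomial (Fin 2) ℂ)
    (hS : S = MvPolynomial.X 0 ^ k * MvPolynomial.X 1 +
        Polynomial.aeval (MvPolynomial.X 0) P)
    (hG : G = MvPolynomial.X 0 ^ q₁ * S ^ q)
    (hH2 : H2 = MvPolynomial.X 0 ^ p₁ * S ^ p *
        ∏ i, (MvPolynomial.C (β i) - G) ^ a i)
    (ψ₁ ψ₂ : MvPolynomial (Fin 2) ℂ) (n₁ n₂ : ℕ)
    (hn₁ : 1 ≤ n₁) (hn₂ : 1 ≤ n₂)
    (hψ₁ : ψ₁.totalDegree = n₁) (hψ₂ : ψ₂.totalDegree = n₂) :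
    (ψ₁ ^ p₁ * (ψ₁ ^ k * ψ₂ + Polynomial.aeval ψ₁ P) ^ p *
        ∏ i, (MvPolynomial.C (β i) -
          ψ₁ ^ q₁ * (ψ₁ ^ k * ψ₂ + Polynomial.aeval ψ₁ P) ^ q) ^ a i).totalDegree
      = p₁ * n₁ + p * (k * n₁ + n₂) + (q₁ * n₁ + q * (k * n₁ + n₂)) * ∑ i, a i ∧
    H2.totalDegree = p₁ + p * (k + 1) + (q₁ + q * (k + 1)) * ∑ i, a i ∧
    H2.totalDegree ≤
      (ψ₁ ^ p₁ * (ψ₁ ^ k * ψ₂ + Polynomial.aeval ψ₁ P) ^ p *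
        ∏ i, (MvPolynomial.C (β i) -
          ψ₁ ^ q₁ * (ψ₁ ^ k * ψ₂ + Polynomial.aeval ψ₁ P) ^ q) ^ a i).totalDegree := by
  have hPn : P.natDegree < k := by
    rcases eq_or_ne P 0 with h | h
    · simp [h]; omega
    · exact (Polynomial.natDegree_lt_iff_degree_lt h).mpr hP
  have h1 := key_deg k p q p₁ q₁ (r - 1) hk (by omega) (by omega) P hPn a β
    ψ₁ ψ₂ n₁ n₂ hn₁ hn₂ hψ₁ hψ₂
  have h2 := key_deg k p q p₁ q₁ (r - 1) hk (by omega) (by omega) P hPn a β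
    (MvPolynomial.X 0) (MvPolynomial.X 1) 1 1 le_rfl le_rfl
    (MvPolynomial.totalDegree_X _) (MvPolynomial.totalDegree_X _)
  subst hH2 hG hS
  refine ⟨h1, h2.trans (by ring), ?_⟩
  rw [h2, h1]
  simp only [mul_one]
  have e1 : p₁ ≤ p₁ * n₁ := Nat.le_mul_of_pos_right _ (by omega)
  have ekk : k + 1 ≤ k * n₁ + n₂ := by nlinarith
  have e2 : p * (k + 1) ≤ p * (k * n₁ + n₂) := Nat.mul_le_mul_left _ ekk
  have e3 : (q₁ + q * (k + 1)) * ∑ i, a i ≤ (q₁ * n₁ + q * (k * n₁ + n₂)) * ∑ i, a i :=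
    Nat.mul_le_mul_right _ (add_le_add (Nat.le_mul_of_pos_right _ (by omega))
      (Nat.mul_le_mul_left _ ekk))
  exact add_le_add (add_le_add e1 e2) e3
end

section
/- Let n ≥ 1 be an integer and let a_{ij} ∈ ℂ, for 1 ≤ j ≤ n and 0 ≤ i ≤ n − j, be arbitrary coefficients. Then there exists a polynomial 𝔭 ∈ ℂ[X] with 𝔭(0) = 0 and of degree at most ⌊(n+1)/2⌋ such that for every 𝔠 ∈ ℂ, the circle integral ∮_{|t−1|=1/2} Σ_{j=1}^{n} Σ_{i=0}^{n−j} a_{ij}·t^i·(𝔠/(1−t))^j dt equals 𝔭(𝔠). Consequently, this function of 𝔠 has at most ⌊(n−1)/2⌋ zeros, counted with multiplicity, in ℂ ∖ {0}. -/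
open Complex Metric Real

lemma circleIntegral_finset_sum {ι : Type*} (s : Finset ι) (f : ι → ℂ → ℂ) (c : ℂ) (R : ℝ)
    (h : ∀ i ∈ s, CircleIntegrable (f i) c R) :
    (∮ z in C(c, R), ∑ i ∈ s, f i z) = ∑ i ∈ s, ∮ z in C(c, R), f i z := by
  simp only [circleIntegral, Finset.smul_sum]
  rw [intervalIntegral.integral_finset_sum]
  intro i hi
  exact (h i hi).out

lemma one_not_mem_sphere : (1 : ℂ) ∉ sphere (1:ℂ) |1/2| := by
  have : |(1/2 : ℝ)| = 1/2 := by norm_num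
  rw [this, mem_sphere_iff_norm, sub_self, norm_zero]
  norm_num

lemma integrand_eq (i j : ℕ) {t : ℂ} (ht : t ∈ sphere (1:ℂ) (1/2)) :
    t ^ i * ((1 - t)⁻¹) ^ j
      = ∑ m ∈ Finset.range (i + 1), ((-1:ℂ)^j * i.choose m) * (t - 1) ^ ((m : ℤ) - j) := by
  have ht1 : t - 1 ≠ 0 := by
    intro h
    rw [mem_sphere_iff_norm] at ht
    rw [sub_eq_zero] at h
    simp [h] at ht
  have h1t : (1 - t) ≠ 0 := by rwa [← neg_sub, neg_ne_zero]
  have hti : t ^ i = ∑ m ∈ Finset.range (i + 1), (i.choose m : ℂ) * (t - 1) ^ m := by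
    conv_lhs => rw [show t = (t - 1) + 1 by ring, add_pow]
    simp [mul_comm]
  calc t ^ i * ((1 - t)⁻¹) ^ j
      = (∑ m ∈ Finset.range (i + 1), (i.choose m : ℂ) * (t - 1) ^ m)
          * ((-1:ℂ)^j * ((t - 1) ^ (j:ℤ))⁻¹) := by
        rw [hti]; congr 1
        rw [show (1 - t) = (-1) * (t - 1) by ring, mul_inv, mul_pow]
        congr 1
        · norm_num
        · rw [zpow_natCast, inv_pow]
    _ = _ := by
        rw [Finset.sum_mul]
        refine Finset.sum_congr rfl fun m hm => ?_
        rw [zpow_sub₀ ht1]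
        push_cast
        rw [zpow_natCast, zpow_natCast]
        field_simp

lemma key_integral (i j : ℕ) (hj : 1 ≤ j) :
    (∮ t in C((1:ℂ), 1/2), t ^ i * ((1 - t)⁻¹) ^ j)
      = (-1:ℂ)^j * (i.choose (j-1)) * (2 * π * I) := by
  rw [circleIntegral.integral_congr (by norm_num) fun t ht => integrand_eq i j ht]
  rw [circleIntegral_finset_sum]
  · have : ∀ m ∈ Finset.range (i + 1),
        (∮ t in C((1:ℂ), 1/2), ((-1:ℂ)^j * i.choose m) * (t - 1) ^ ((m : ℤ) - j))
        = if m = j - 1 then (-1:ℂ)^j * (i.choose (j-1)) * (2 * π * I) else 0 := by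
      intro m hm
      rw [circleIntegral.integral_const_mul]
      by_cases hmj : m = j - 1
      · have : (m : ℤ) - j = -1 := by omega
        rw [this, hmj]
        have : (∮ t in C((1:ℂ), 1/2), (t - 1) ^ (-1 : ℤ)) = 2 * π * I := by
          simpa using circleIntegral.integral_sub_inv_of_mem_ball
            (c := (1:ℂ)) (w := 1) (R := 1/2) (by simp; norm_num)
        rw [this, if_pos rfl]
      · rw [circleIntegral.integral_sub_zpow_of_ne (by omega), mul_zero, if_neg hmj]
    rw [Finset.sum_congr rfl this, Finset.sum_ite_eq' (Finset.range (i+1)) (j-1)]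
    by_cases hji : j - 1 ∈ Finset.range (i + 1)
    · simp [hji]
    · rw [if_neg hji]
      have : i.choose (j - 1) = 0 := Nat.choose_eq_zero_of_lt (by
        simp [Finset.mem_range] at hji; omega)
      simp [this]
  · intro m hm
    exact (circleIntegrable_sub_zpow_iff.mpr (Or.inr (Or.inr one_not_mem_sphere))).const_mul _

/-- The Abelian integral for the harmonic oscillator normal form
`ℋ(x,y) = y(1−x)` is a polynomial `𝔭` in `𝔠` of degree at most `⌊(n+1)/2⌋`
vanishing at `𝔠 = 0`; consequently it has at most `⌊(n−1)/2⌋` zeros counted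
with multiplicity in `ℂ ∖ {0}`. -/
theorem stmt12 (n : ℕ) (hn : 1 ≤ n) (aij : ℕ → ℕ → ℂ) :
    ∃ 𝔭 : Polynomial ℂ, 𝔭.eval 0 = 0 ∧
      𝔭.degree ≤ (((n + 1) / 2 : ℕ) : WithBot ℕ) ∧
      (∀ 𝔠 : ℂ,
        (∮ t in C(1, 1/2),
          ∑ j ∈ Finset.Icc 1 n, ∑ i ∈ Finset.range (n - j + 1),
            aij i j * t ^ i * (𝔠 / (1 - t)) ^ j) = 𝔭.eval 𝔠) ∧
      (𝔭 ≠ 0 → Multiset.card (𝔭.roots.filter fun z => z ≠ 0) ≤ (n - 1) / 2) := by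
  classical
  set b : ℕ → ℂ := fun j => ∑ i ∈ Finset.range (n - j + 1),
    aij i j * ((-1:ℂ)^j * (i.choose (j-1)) * (2 * π * I)) with hb
  set p : Polynomial ℂ := ∑ j ∈ Finset.Icc 1 n, Polynomial.C (b j) * Polynomial.X ^ j with hp
  have hb0 : ∀ j, (n+1)/2 < j → b j = 0 := by
    intro j hj
    rw [hb]
    refine Finset.sum_eq_zero fun i hi => ?_
    rw [Finset.mem_range] at hi
    have : i.choose (j-1) = 0 := Nat.choose_eq_zero_of_lt (by omega)
    simp [this]
  have heval : ∀ 𝔠 : ℂ, p.eval 𝔠 = ∑ j ∈ Finset.Icc 1 n, b j * 𝔠 ^ j := by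
    intro 𝔠
    rw [hp, Polynomial.eval_finset_sum]
    simp
  refine ⟨p, ?_, ?_, ?_, ?_⟩
  · rw [heval]
    refine Finset.sum_eq_zero fun j hj => ?_
    rw [Finset.mem_Icc] at hj
    rw [zero_pow (by omega), mul_zero]
  · rw [hp]
    refine (Polynomial.degree_sum_le _ _).trans (Finset.sup_le fun j hj => ?_)
    by_cases h : j ≤ (n+1)/2
    · exact (Polynomial.degree_C_mul_X_pow_le _ _).trans (by exact_mod_cast h)
    · rw [hb0 j (by omega)]
      simp
  · intro 𝔠
    have hne : ∀ t ∈ sphere (1:ℂ) (1/2), (1 : ℂ) - t ≠ 0 := by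
      intro t ht h
      rw [mem_sphere_iff_norm] at ht
      rw [sub_eq_zero] at h
      simp [← h] at ht
    have hcont : ∀ i j : ℕ,
        ContinuousOn (fun t : ℂ => aij i j * t ^ i * (𝔠 / (1 - t)) ^ j)
          (sphere (1:ℂ) (1/2)) := by
      intro i j
      exact ((continuousOn_const.mul (continuousOn_pow i)).mul
        ((continuousOn_const.div
          (continuousOn_const.sub continuousOn_id) hne).pow j))
    rw [circleIntegral_finset_sum _ _ _ _ (fun j _ =>
      ContinuousOn.circleIntegrable (by norm_num)
        (continuousOn_finset_sum _ fun i _ => hcont i j))]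
    rw [heval]
    refine Finset.sum_congr rfl fun j hj => ?_
    rw [Finset.mem_Icc] at hj
    rw [circleIntegral_finset_sum _ _ _ _ (fun i _ =>
      ContinuousOn.circleIntegrable (by norm_num) (hcont i j))]
    have step : ∀ i : ℕ,
        (∮ t in C((1:ℂ), 1/2), aij i j * t ^ i * (𝔠 / (1 - t)) ^ j)
          = aij i j * 𝔠 ^ j * ((-1:ℂ)^j * (i.choose (j-1)) * (2 * π * I)) := by
      intro i
      have : (fun t : ℂ => aij i j * t ^ i * (𝔠 / (1 - t)) ^ j)
          = fun t : ℂ => (aij i j * 𝔠 ^ j) * (t ^ i * ((1 - t)⁻¹) ^ j) := by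
        funext t; ring
      rw [this, circleIntegral.integral_const_mul, key_integral i j hj.1]
    rw [Finset.sum_congr rfl fun i _ => step i, hb, Finset.sum_mul]
    exact Finset.sum_congr rfl fun i _ => by ring
  · intro hp0
    have h0 : (0 : ℂ) ∈ p.roots := by
      rw [Polynomial.mem_roots hp0]
      rw [Polynomial.IsRoot.def]
      rw [heval]
      refine Finset.sum_eq_zero fun j hj => ?_
      rw [Finset.mem_Icc] at hj
      rw [zero_pow (by omega), mul_zero]
    have hcard : Multiset.card p.roots ≤ (n+1)/2 := by
      refine p.card_roots'.trans ?_
      have := Polynomial.natDegree_le_iff_degree_le.mpr (?_ : p.degree ≤ (((n+1)/2 : ℕ) : WithBot ℕ))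
      · exact this
      · rw [hp]
        refine (Polynomial.degree_sum_le _ _).trans (Finset.sup_le fun j hj => ?_)
        by_cases h : j ≤ (n+1)/2
        · exact (Polynomial.degree_C_mul_X_pow_le _ _).trans (by exact_mod_cast h)
        · rw [hb0 j (by omega)]
          simp
    have hsplit := Multiset.filter_add_not (fun z : ℂ => z ≠ 0) p.roots
    have h1 : 1 ≤ Multiset.card (p.roots.filter fun z : ℂ => ¬ z ≠ 0) := by
      exact Multiset.card_pos_iff_exists_mem.mpr ⟨0, Multiset.mem_filter.mpr ⟨h0, by simp⟩⟩
    have := congrArg Multiset.card hsplit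
    rw [Multiset.card_add] at this
    omega
end

section
/- Let n ≥ 2 be an integer and set s = ⌊(n+1)/3⌋ (so s ≥ 1). Then for every 𝔠 ∈ ℂ: (i) ∮_{|t−1|=1/2} (𝔠 + 1 − t)^n/(1 − t)^{2n} dt = 0; (ii) ∮_{|t−1|=1/2} (𝔠 + 1 − t)^s/(1 − t) dt = −2π√(−1)·𝔠^s; (iii) ∮_{|t−1|=1/2} (𝔠 + 1 − t)/(1 − t)² dt = −2π√(−1). Consequently, the function 𝔠 ↦ ∮_{|t−1|=1/2} [ (𝔠+1−t)^n/(1−t)^{2n} − s·( (𝔠+1−t)^s/(1−t) − (𝔠+1−t)/(1−t)² ) ] dt equals 2π√(−1)·s·(𝔠^s − 1), which has exactly s distinct zeros, all lying in ℂ ∖ {0}. -/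
open Complex Finset Metric

lemma sphere_ne {t : ℂ} (ht : t ∈ sphere (1:ℂ) (1/2)) : t - 1 ≠ 0 := by
  intro h
  rw [mem_sphere, sub_eq_zero] at *
  subst h; simp at ht

lemma circleIntegral_sum {ι : Type*} (S : Finset ι) (f : ι → ℂ → ℂ) (c : ℂ) (R : ℝ)
    (h : ∀ i ∈ S, CircleIntegrable (f i) c R) :
    (∮ t in C(c, R), ∑ i ∈ S, f i t) = ∑ i ∈ S, ∮ t in C(c, R), f i t := by
  simp only [circleIntegral, smul_sum]
  exact intervalIntegral.integral_finset_sum fun i hi => (h i hi).out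

lemma Zpow (m : ℤ) : (∮ t in C((1:ℂ), (1/2:ℝ)), (t - 1) ^ m)
    = if m = -1 then 2 * Real.pi * I else 0 := by
  split_ifs with h
  · subst h
    simp only [zpow_neg_one]
    exact circleIntegral.integral_sub_inv_of_mem_ball (by simp)
  · exact circleIntegral.integral_sub_zpow_of_ne h 1 1 (1/2)

lemma expand (k N : ℕ) (𝔠 t : ℂ) (ht : t - 1 ≠ 0) :
    (𝔠 + 1 - t) ^ k * (t - 1) ^ (-(N:ℤ)) =
      ∑ m ∈ range (k+1), ((-1)^(m+k) * 𝔠^m * (k.choose m : ℂ)) * (t-1) ^ ((k:ℤ) - m - N) := by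
  have h1 : 𝔠 + 1 - t = 𝔠 - (t - 1) := by ring
  rw [h1, sub_pow, sum_mul]
  refine Finset.sum_congr rfl fun m hm => ?_
  rw [mem_range, Nat.lt_succ_iff] at hm
  have h2 : ((t-1) ^ (k-m)) * (t-1) ^ (-(N:ℤ)) = (t-1) ^ ((k:ℤ) - m - N) := by
    rw [← zpow_natCast (t-1) (k-m), ← zpow_add₀ ht]
    congr 1
    omega
  rw [show ((-1:ℂ))^(m+k) * 𝔠^m * (t-1)^(k-m) * (k.choose m : ℂ) * (t-1)^(-(N:ℤ))
      = ((-1)^(m+k) * 𝔠^m * (k.choose m : ℂ)) * ((t-1)^(k-m) * (t-1)^(-(N:ℤ))) from by ring, h2]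

lemma G (k N : ℕ) (𝔠 : ℂ) :
    (∮ t in C((1:ℂ), (1/2:ℝ)), (𝔠 + 1 - t) ^ k * (t - 1) ^ (-(N:ℤ)))
      = if 1 ≤ N ∧ N ≤ k + 1 then
          ((-1)^((k+1-N)+k) * 𝔠^(k+1-N) * (k.choose (k+1-N) : ℂ)) * (2 * Real.pi * I)
        else 0 := by
  rw [circleIntegral.integral_congr (by norm_num)
      (fun t ht => expand k N 𝔠 t (sphere_ne ht))]
  rw [circleIntegral_sum _ _ _ _ (fun m hm => ?_)]
  · have step : ∀ m ∈ range (k+1),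
        (∮ t in C((1:ℂ), (1/2:ℝ)), ((-1)^(m+k) * 𝔠^m * (k.choose m : ℂ)) * (t-1) ^ ((k:ℤ) - m - N))
        = if m = k+1-N ∧ (1 ≤ N ∧ N ≤ k+1) then
            ((-1)^(m+k) * 𝔠^m * (k.choose m : ℂ)) * (2 * Real.pi * I) else 0 := by
      intro m hm
      rw [mem_range, Nat.lt_succ_iff] at hm
      rw [circleIntegral.integral_const_mul, Zpow]
      have hiff : ((k:ℤ) - m - N = -1) ↔ (m = k+1-N ∧ (1 ≤ N ∧ N ≤ k+1)) := by omega
      by_cases h : (k:ℤ) - m - N = -1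
      · rw [if_pos h, if_pos (hiff.mp h)]
      · rw [if_neg h, if_neg (fun hc => h (hiff.mpr hc)), mul_zero]
    rw [Finset.sum_congr rfl step]
    by_cases hP : 1 ≤ N ∧ N ≤ k + 1
    · simp only [hP, and_true]
      rw [Finset.sum_ite_eq' (range (k+1)) (k+1-N)
        (fun m => ((-1)^(m+k) * 𝔠^m * (k.choose m : ℂ)) * (2 * Real.pi * I)),
        if_pos (by rw [mem_range]; omega)]
      simp
    · simp only [hP, and_false, if_false, Finset.sum_const_zero]
  · refine ContinuousOn.circleIntegrable (by norm_num) ?_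
    refine continuousOn_const.mul ?_
    refine ContinuousOn.zpow₀ (continuousOn_id.sub continuousOn_const) _ fun a ha => ?_
    exact Or.inl (sphere_ne ha)

lemma one_sub_ne {t : ℂ} (ht : t ∈ sphere (1:ℂ) (1/2)) : (1:ℂ) - t ≠ 0 := by
  intro h; exact sphere_ne ht (by linear_combination -h)

lemma P1 (n : ℕ) (hn : 2 ≤ n) (𝔠 : ℂ) :
    (∮ t in C((1:ℂ), (1/2:ℝ)), (𝔠 + 1 - t) ^ n / (1 - t) ^ (2 * n)) = 0 := by
  have e : Set.EqOn (fun t : ℂ => (𝔠 + 1 - t) ^ n / (1 - t) ^ (2 * n))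
      (fun t : ℂ => (𝔠 + 1 - t) ^ n * (t - 1) ^ (-((2*n : ℕ) : ℤ))) (sphere (1:ℂ) (1/2)) := by
    intro t _
    simp only [zpow_neg, zpow_natCast, div_eq_mul_inv]
    rw [show (1 - t) = -(t - 1) from by ring, Even.neg_pow (even_two_mul n)]
  rw [circleIntegral.integral_congr (by norm_num) e, G, if_neg (by omega)]

lemma P2 (s : ℕ) (𝔠 : ℂ) :
    (∮ t in C((1:ℂ), (1/2:ℝ)), (𝔠 + 1 - t) ^ s / (1 - t))
      = -(2 * Real.pi * I) * 𝔠 ^ s := by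
  have e : Set.EqOn (fun t : ℂ => (𝔠 + 1 - t) ^ s / (1 - t))
      (fun t : ℂ => (-1 : ℂ) * ((𝔠 + 1 - t) ^ s * (t - 1) ^ (-((1 : ℕ) : ℤ))))
      (sphere (1:ℂ) (1/2)) := by
    intro t ht
    have h := sphere_ne ht
    simp only [zpow_neg, zpow_natCast, pow_one]
    field_simp [one_sub_ne ht]
    ring
  rw [circleIntegral.integral_congr (by norm_num) e, circleIntegral.integral_const_mul,
    G, if_pos (by omega)]
  simp [Nat.choose_self, Even.neg_one_pow (⟨s, rfl⟩ : Even (s + 1 - 1 + s))]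
  ring

lemma P3 (𝔠 : ℂ) :
    (∮ t in C((1:ℂ), (1/2:ℝ)), (𝔠 + 1 - t) / (1 - t) ^ 2) = -(2 * Real.pi * I) := by
  have e : Set.EqOn (fun t : ℂ => (𝔠 + 1 - t) / (1 - t) ^ 2)
      (fun t : ℂ => (𝔠 + 1 - t) ^ 1 * (t - 1) ^ (-((2 : ℕ) : ℤ))) (sphere (1:ℂ) (1/2)) := by
    intro t _
    simp only [zpow_neg, zpow_natCast, pow_one, div_eq_mul_inv]
    rw [show (1 - t) = -(t - 1) from by ring, Even.neg_pow even_two]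
  rw [circleIntegral.integral_congr (by norm_num) e, G, if_pos (by omega)]
  norm_num

/-- Sharpness of the bound `⌊(n+1)/3⌋` for Broughton's polynomial: explicit
rectified Abelian integrals, whose combination equals `2π√−1·s·(𝔠^s − 1)` and
has exactly `s` distinct zeros, all in `ℂ ∖ {0}`. -/
theorem stmt15 (n : ℕ) (hn : 2 ≤ n) (s : ℕ) (hs : s = (n + 1) / 3) :
    (∀ 𝔠 : ℂ, (∮ t in C(1, 1/2), (𝔠 + 1 - t) ^ n / (1 - t) ^ (2 * n)) = 0) ∧
    (∀ 𝔠 : ℂ, (∮ t in C(1, 1/2), (𝔠 + 1 - t) ^ s / (1 - t))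
        = -(2 * Real.pi * Complex.I) * 𝔠 ^ s) ∧
    (∀ 𝔠 : ℂ, (∮ t in C(1, 1/2), (𝔠 + 1 - t) / (1 - t) ^ 2)
        = -(2 * Real.pi * Complex.I)) ∧
    (∀ 𝔠 : ℂ,
      (∮ t in C(1, 1/2),
        ((𝔠 + 1 - t) ^ n / (1 - t) ^ (2 * n) -
          (s : ℂ) * ((𝔠 + 1 - t) ^ s / (1 - t) - (𝔠 + 1 - t) / (1 - t) ^ 2)))
        = 2 * Real.pi * Complex.I * (s : ℂ) * (𝔠 ^ s - 1)) ∧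
    {𝔠 : ℂ |
      (∮ t in C(1, 1/2),
        ((𝔠 + 1 - t) ^ n / (1 - t) ^ (2 * n) -
          (s : ℂ) * ((𝔠 + 1 - t) ^ s / (1 - t) - (𝔠 + 1 - t) / (1 - t) ^ 2))) = 0}.ncard
      = s ∧
    (0 : ℂ) ∉ {𝔠 : ℂ |
      (∮ t in C(1, 1/2),
        ((𝔠 + 1 - t) ^ n / (1 - t) ^ (2 * n) -
          (s : ℂ) * ((𝔠 + 1 - t) ^ s / (1 - t) - (𝔠 + 1 - t) / (1 - t) ^ 2))) = 0} := by
  have hs1 : 0 < s := by omega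
  have c1 : ∀ 𝔠 : ℂ, ContinuousOn (fun t : ℂ => (𝔠 + 1 - t) ^ n / (1 - t) ^ (2 * n))
      (sphere (1:ℂ) (1/2)) := fun 𝔠 =>
    (Continuous.continuousOn (by fun_prop)).div (Continuous.continuousOn (by fun_prop))
      fun t ht => pow_ne_zero _ (one_sub_ne ht)
  have c2 : ∀ 𝔠 : ℂ, ContinuousOn (fun t : ℂ => (𝔠 + 1 - t) ^ s / (1 - t))
      (sphere (1:ℂ) (1/2)) := fun 𝔠 =>
    (Continuous.continuousOn (by fun_prop)).div (Continuous.continuousOn (by fun_prop))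
      fun t ht => one_sub_ne ht
  have c3 : ∀ 𝔠 : ℂ, ContinuousOn (fun t : ℂ => (𝔠 + 1 - t) / (1 - t) ^ 2)
      (sphere (1:ℂ) (1/2)) := fun 𝔠 =>
    (Continuous.continuousOn (by fun_prop)).div (Continuous.continuousOn (by fun_prop))
      fun t ht => pow_ne_zero _ (one_sub_ne ht)
  have P4 : ∀ 𝔠 : ℂ,
      (∮ t in C((1:ℂ), (1/2:ℝ)),
        ((𝔠 + 1 - t) ^ n / (1 - t) ^ (2 * n) -
          (s : ℂ) * ((𝔠 + 1 - t) ^ s / (1 - t) - (𝔠 + 1 - t) / (1 - t) ^ 2)))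
        = 2 * Real.pi * Complex.I * (s : ℂ) * (𝔠 ^ s - 1) := by
    intro 𝔠
    rw [circleIntegral.integral_sub ((c1 𝔠).circleIntegrable (by norm_num))
        ((show ContinuousOn (fun t : ℂ => (s : ℂ) * ((𝔠 + 1 - t) ^ s / (1 - t) - (𝔠 + 1 - t) / (1 - t) ^ 2))
          (sphere (1:ℂ) (1/2)) from continuousOn_const.mul (((c2 𝔠).sub (c3 𝔠)))).circleIntegrable (by norm_num)),
      circleIntegral.integral_const_mul,
      circleIntegral.integral_sub ((c2 𝔠).circleIntegrable (by norm_num))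
        ((c3 𝔠).circleIntegrable (by norm_num)),
      P1 n hn 𝔠, P2 s 𝔠, P3 𝔠]
    ring
  have key : ∀ 𝔠 : ℂ,
      ((∮ t in C((1:ℂ), (1/2:ℝ)),
        ((𝔠 + 1 - t) ^ n / (1 - t) ^ (2 * n) -
          (s : ℂ) * ((𝔠 + 1 - t) ^ s / (1 - t) - (𝔠 + 1 - t) / (1 - t) ^ 2))) = 0)
        ↔ 𝔠 ^ s = 1 := by
    intro 𝔠
    rw [P4 𝔠]
    simp [mul_eq_zero, Real.pi_ne_zero, Complex.I_ne_zero, sub_eq_zero, hs1.ne',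
      Complex.ofReal_eq_zero]
  have hset : {𝔠 : ℂ |
      (∮ t in C((1:ℂ), (1/2:ℝ)),
        ((𝔠 + 1 - t) ^ n / (1 - t) ^ (2 * n) -
          (s : ℂ) * ((𝔠 + 1 - t) ^ s / (1 - t) - (𝔠 + 1 - t) / (1 - t) ^ 2))) = 0}
      = ↑(Polynomial.nthRootsFinset s (1 : ℂ)) := by
    ext 𝔠
    simp only [Set.mem_setOf_eq, key, Finset.mem_coe, Polynomial.mem_nthRootsFinset hs1 (1 : ℂ)]
  refine ⟨P1 n hn, P2 s, P3, P4, ?_, ?_⟩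
  · rw [hset, Set.ncard_coe_finset,
      (Complex.isPrimitiveRoot_exp s hs1.ne').card_nthRootsFinset]
  · simp only [Set.mem_setOf_eq, key, zero_pow hs1.ne']
    exact zero_ne_one
end
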